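/- The Jaccard distance d(E,F) = 1 − |E ∩ F| / |E ∪ F| (with d(∅,∅) = 0) is a metric on the collection of finite subsets of a fixed set; in particular it satisfies the triangle inequality. -/

import Mathlib

open Finset

/-- Jaccard distance on finite sets, with `d(∅,∅) = 0`. -/
noncomputable def jaccardDist {α : Type*} [DecidableEq α] (E F : Finset α) : ℝ :=
  if E ∪ F = ∅ then 0 else 1 - ((E ∩ F).card : ℝ) / ((E ∪ F).card : ℝ)

lemma jaccardDist_nonneg {α : Type*} [DecidableEq α] (E F : Finset α) :
    0 ≤ jaccardDist E F := by
  unfold jaccardDist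
  split
  · exact le_rfl
  · rename_i h
    have hpos : (0 : ℝ) < (E ∪ F).card := by
      have : (E ∪ F).Nonempty := Finset.nonempty_iff_ne_empty.mpr h
      exact_mod_cast Finset.card_pos.mpr this
    have hle : ((E ∩ F).card : ℝ) ≤ ((E ∪ F).card : ℝ) := by
      exact_mod_cast Finset.card_le_card (Finset.inter_subset_union)
    have : ((E ∩ F).card : ℝ) / ((E ∪ F).card : ℝ) ≤ 1 := by
      rw [div_le_one hpos]; exact hle
    linarith

lemma jaccard_key {α : Type*} [DecidableEq α] (E F G : Finset α) :
    (E ∪ G).card + (E ∩ F).card + (F ∩ G).card + 2 * (F \ (E ∪ G)).card ≤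
      (E ∩ G).card + (E ∪ F).card + (F ∪ G).card := by
  classical
  set U := E ∪ F ∪ G with hU
  have hcard : ∀ X : Finset α, X ⊆ U → X.card = ∑ x ∈ U, (if x ∈ X then 1 else 0) := by
    intro X hX
    rw [← Finset.card_filter]
    congr 1
    rw [Finset.filter_mem_eq_inter, Finset.inter_eq_right.mpr hX]
  have h1 : E ∪ G ⊆ U := by intro x; simp [hU, Finset.mem_union]; tauto
  have h2 : E ∩ F ⊆ U := by intro x; simp [hU, Finset.mem_union, Finset.mem_inter]; tauto
  have h3 : F ∩ G ⊆ U := by intro x; simp [hU, Finset.mem_union, Finset.mem_inter]; tauto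
  have h4 : F \ (E ∪ G) ⊆ U := by intro x; simp [hU, Finset.mem_union, Finset.mem_sdiff]; tauto
  have h5 : E ∩ G ⊆ U := by intro x; simp [hU, Finset.mem_union, Finset.mem_inter]; tauto
  have h6 : E ∪ F ⊆ U := by intro x; simp [hU, Finset.mem_union]; tauto
  have h7 : F ∪ G ⊆ U := by intro x; simp [hU, Finset.mem_union]; tauto
  rw [hcard _ h1, hcard _ h2, hcard _ h3, hcard _ h4, hcard _ h5, hcard _ h6, hcard _ h7,
  ]
  simp only [Finset.mul_sum, ← Finset.sum_add_distrib]
  apply Finset.sum_le_sum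
  intro x hx
  by_cases hE : x ∈ E <;> by_cases hF : x ∈ F <;> by_cases hG : x ∈ G <;>
    simp [Finset.mem_union, Finset.mem_inter, Finset.mem_sdiff, hE, hF, hG]

/-- The Jaccard distance is a metric on the finite subsets of a fixed set: it
vanishes exactly on the diagonal, is symmetric, and satisfies the triangle
inequality. -/
theorem jaccardDist_is_metric {α : Type*} [DecidableEq α] :
    (∀ E F : Finset α, jaccardDist E F = 0 ↔ E = F) ∧
      (∀ E F : Finset α, 0 ≤ jaccardDist E F) ∧
      (∀ E F : Finset α, jaccardDist E F = jaccardDist F E) ∧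
      (∀ E F G : Finset α, jaccardDist E G ≤ jaccardDist E F + jaccardDist F G) := by
  classical
  refine ⟨?_, jaccardDist_nonneg, ?_, ?_⟩
  · -- vanishes iff equal
    intro E F
    unfold jaccardDist
    split
    · rename_i h
      rw [Finset.union_eq_empty] at h
      simp [h.1, h.2]
    · rename_i h
      have hpos : (0 : ℝ) < (E ∪ F).card := by
        have : (E ∪ F).Nonempty := Finset.nonempty_iff_ne_empty.mpr h
        exact_mod_cast Finset.card_pos.mpr this
      constructor
      · intro h0
        have : ((E ∩ F).card : ℝ) = ((E ∪ F).card : ℝ) := by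
          field_simp at h0
          linarith [h0]
        have hcard : (E ∪ F).card ≤ (E ∩ F).card := by exact_mod_cast this.ge
        have heq : E ∩ F = E ∪ F :=
          Finset.eq_of_subset_of_card_le Finset.inter_subset_union hcard
        have hEF : E ⊆ F := fun x hx => by
          have : x ∈ E ∩ F := heq ▸ Finset.mem_union_left F hx
          exact (Finset.mem_inter.mp this).2
        have hFE : F ⊆ E := fun x hx => by
          have : x ∈ E ∩ F := heq ▸ Finset.mem_union_right E hx
          exact (Finset.mem_inter.mp this).1
        exact Finset.Subset.antisymm hEF hFE
      · rintro rfl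
        rw [Finset.inter_self, Finset.union_self] at *
        field_simp
        norm_num
  · -- symmetry
    intro E F
    unfold jaccardDist
    rw [Finset.union_comm, Finset.inter_comm]
  · -- triangle inequality
    intro E F G
    by_cases hEF : E ∪ F = ∅
    · rw [Finset.union_eq_empty] at hEF
      obtain ⟨rfl, rfl⟩ := hEF
      have h0 : jaccardDist (∅ : Finset α) ∅ = 0 := by simp [jaccardDist]
      rw [h0]; linarith
    by_cases hFG : F ∪ G = ∅
    · rw [Finset.union_eq_empty] at hFG
      obtain ⟨rfl, rfl⟩ := hFG
      have h0 : jaccardDist (∅ : Finset α) (∅ : Finset α) = 0 := by simp [jaccardDist]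
      rw [h0]; linarith [jaccardDist_nonneg E (∅ : Finset α)]
    by_cases hEG : E ∪ G = ∅
    · rw [Finset.union_eq_empty] at hEG
      obtain ⟨rfl, rfl⟩ := hEG
      have h0 : jaccardDist (∅ : Finset α) (∅ : Finset α) = 0 := by simp [jaccardDist]
      rw [h0]
      linarith [jaccardDist_nonneg (∅ : Finset α) F, jaccardDist_nonneg F (∅ : Finset α)]
    -- main case
    set a := (E ∩ F).card
    set b := (E ∪ F).card
    set c := (F ∩ G).card
    set d := (F ∪ G).card
    set p := (E ∩ G).card
    set q := (E ∪ G).card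
    set k := (F \ (E ∪ G)).card
    set n := (E ∪ F ∪ G).card with hn
    have hbpos : 0 < b := Finset.card_pos.mpr (Finset.nonempty_iff_ne_empty.mpr hEF)
    have hdpos : 0 < d := Finset.card_pos.mpr (Finset.nonempty_iff_ne_empty.mpr hFG)
    have hqpos : 0 < q := Finset.card_pos.mpr (Finset.nonempty_iff_ne_empty.mpr hEG)
    have hab : a ≤ b := Finset.card_le_card Finset.inter_subset_union
    have hcd : c ≤ d := Finset.card_le_card Finset.inter_subset_union
    have hpq : p ≤ q := Finset.card_le_card Finset.inter_subset_union
    have hbn : b ≤ n := Finset.card_le_card (by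
      intro x hx
      simp only [Finset.mem_union] at hx ⊢
      tauto)
    have hdn : d ≤ n := Finset.card_le_card (by
      intro x hx
      simp only [Finset.mem_union] at hx ⊢
      tauto)
    have hnqk : n = q + k := by
      have hdisj : Disjoint (E ∪ G) (F \ (E ∪ G)) := Finset.disjoint_sdiff
      have hset : E ∪ F ∪ G = (E ∪ G) ∪ (F \ (E ∪ G)) := by
        ext x
        simp only [Finset.mem_union, Finset.mem_sdiff]
        tauto
      rw [hn, hset, Finset.card_union_of_disjoint hdisj]
    have hkey : q + a + c + 2 * k ≤ p + b + d := jaccard_key E F G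
    -- move to ℝ
    have ha : (0:ℝ) ≤ a := by positivity
    have hc : (0:ℝ) ≤ c := by positivity
    have hk : (0:ℝ) ≤ k := by positivity
    have hbpos' : (0:ℝ) < b := by exact_mod_cast hbpos
    have hdpos' : (0:ℝ) < d := by exact_mod_cast hdpos
    have hqpos' : (0:ℝ) < q := by exact_mod_cast hqpos
    have hnpos' : (0:ℝ) < n := by
      have : 0 < n := hqpos.trans_le (by omega)
      exact_mod_cast this
    have hab' : (a:ℝ) ≤ b := by exact_mod_cast hab
    have hcd' : (c:ℝ) ≤ d := by exact_mod_cast hcd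
    have hpq' : (p:ℝ) ≤ q := by exact_mod_cast hpq
    have hbn' : (b:ℝ) ≤ n := by exact_mod_cast hbn
    have hdn' : (d:ℝ) ≤ n := by exact_mod_cast hdn
    have hnqk' : (n:ℝ) = q + k := by exact_mod_cast hnqk
    have hkey' : (q:ℝ) + a + c + 2 * k ≤ p + b + d := by exact_mod_cast hkey
    have step1 : ((q:ℝ) - p) / q ≤ ((q:ℝ) - p + 2 * k) / n := by
      rw [div_le_div_iff₀ hqpos' hnpos']
      nlinarith [hpq', hk, hqpos', hnqk']
    have step2' : ((q:ℝ) - p + 2 * k) / n ≤ (((b:ℝ) - a) + ((d:ℝ) - c)) / n := by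
      rw [div_le_div_iff₀ hnpos' hnpos']
      nlinarith [hkey', hnpos']
    have step3 : ((b:ℝ) - a) / n ≤ ((b:ℝ) - a) / b := by
      rw [div_le_div_iff₀ hnpos' hbpos']
      exact mul_le_mul_of_nonneg_left hbn' (by linarith)
    have step4 : ((d:ℝ) - c) / n ≤ ((d:ℝ) - c) / d := by
      rw [div_le_div_iff₀ hnpos' hdpos']
      exact mul_le_mul_of_nonneg_left hdn' (by linarith)
    have hmain : ((q:ℝ) - p) / q ≤ ((b:ℝ) - a) / b + ((d:ℝ) - c) / d := by
      calc ((q:ℝ) - p) / q ≤ ((q:ℝ) - p + 2 * k) / n := step1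
        _ ≤ (((b:ℝ) - a) + ((d:ℝ) - c)) / n := step2'
        _ = ((b:ℝ) - a) / n + ((d:ℝ) - c) / n := by ring
        _ ≤ ((b:ℝ) - a) / b + ((d:ℝ) - c) / d := add_le_add step3 step4
    unfold jaccardDist
    rw [if_neg hEG, if_neg hEF, if_neg hFG]
    have e1 : ((q:ℝ) - p) / q = 1 - (p:ℝ) / q := by
      rw [sub_div, div_self hqpos'.ne']
    have e2 : ((b:ℝ) - a) / b = 1 - (a:ℝ) / b := by
      rw [sub_div, div_self hbpos'.ne']
    have e3 : ((d:ℝ) - c) / d = 1 - (c:ℝ) / d := by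
      rw [sub_div, div_self hdpos'.ne']
    rw [← e1, ← e2, ← e3]
    exact hmain
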